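/- Lemma (Billig/Iohara–Saito–Wakimoto): Let A = ℂ[e^ζ, e^{-ζ}] ⊗ ℂ[z_1,z_2,…]. For γ in a finite set Υ, let D_γ(ζ) = Σ_{n≥0} ζ^n D_{γ,n} be a polynomial (in ζ, of finite degree when applied to a fixed element) with coefficients D_{γ,n} differential operators on A not depending on ζ (but possibly involving ∂/∂ζ). If g_γ(ζ,z) ∈ A satisfy Σ_{γ∈Υ} Σ_{q∈ℤ} e^{qζ} D_γ(q) g_γ(ζ,z) = 0, then Σ_{γ∈Υ} D_γ(ω - ∂/∂ζ) g_γ(ζ,z) |_{ζ=0} = 0 for any parameter ω. -/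
import Mathlib


/-- Lemma of Billig / Iohara–Saito–Wakimoto.  Model `A = ℂ[e^ζ, e^{-ζ}] ⊗ ℂ[z₁,z₂,…]`
as `ℤ →₀ ℂ[z₁,z₂,…]` (the `q`-th coefficient being the coefficient of `e^{qζ}`).
Let `Z = ∂/∂ζ` (acting by `e^{qζ}f ↦ q e^{qζ}f`), let `mulE q` be multiplication by
`e^{qζ}`, and let `ev0` be evaluation at `ζ = 0`.  Let `D γ n` (γ in a finite set,
`n ∈ ℕ`) be linear operators on `A` not depending on `ζ` (they commute with `Z`,
as operators built from the `z`-variables and `∂/∂ζ` do), with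
`D_γ(ζ) = Σ_n ζⁿ D_{γ,n}` locally finite.  If
`Σ_γ Σ_{q∈ℤ} e^{qζ} D_γ(q) g_γ = 0` (all sums finitely supported), then
`Σ_γ D_γ(ω - ∂/∂ζ) g_γ |_{ζ=0} = 0` for any parameter `ω`. -/
theorem stmt_19 {Υ : Type*} [Fintype Υ] :
    let A := ℤ →₀ MvPolynomial ℕ ℂ
    let Z : A →ₗ[ℂ] A := Finsupp.lsum ℂ fun q => (q : ℂ) • Finsupp.lsingle q
    let mulE : ℤ → (A →ₗ[ℂ] A) := fun q => Finsupp.lsum ℂ fun q' => Finsupp.lsingle (q' + q)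
    let ev0 : A → MvPolynomial ℕ ℂ := fun a => a.sum fun _ f => f
    ∀ (D : Υ → ℕ → (A →ₗ[ℂ] A)) (g : Υ → A),
      (∀ γ n, Z ∘ₗ D γ n = D γ n ∘ₗ Z) →
      (∀ γ (a : A), ∃ N : ℕ, ∀ n, N ≤ n → D γ n a = 0) →
      (∀ γ, Set.Finite {q : ℤ | (∑ᶠ n : ℕ, (q : ℂ) ^ n • D γ n (g γ)) ≠ 0}) →
      (∑ γ : Υ, ∑ᶠ q : ℤ, mulE q (∑ᶠ n : ℕ, (q : ℂ) ^ n • D γ n (g γ))) = 0 →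
      ∀ ω : ℂ,
        ∑ γ : Υ, ev0 (∑ᶠ n : ℕ,
          ((ω • (LinearMap.id : A →ₗ[ℂ] A) - Z) ^ n) (D γ n (g γ))) = 0 := by
  intro A Z mulE ev0 D g _hZD hN hfin hsum ω
  classical
  choose N hNspec using fun γ => hN γ (g γ)
  set T : Υ → Finset ℤ := fun γ =>
    (Finset.range (N γ)).biUnion fun n => (D γ n (g γ)).support with hT
  have hsuppT : ∀ γ, ∀ n ∈ Finset.range (N γ), (D γ n (g γ)).support ⊆ T γ := by
    intro γ n hn
    exact Finset.subset_biUnion_of_mem (fun n => (D γ n (g γ)).support) hn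
  have hev0 : ∀ b : A, ev0 b
      = (Finsupp.lsum ℂ fun _ : ℤ =>
          (LinearMap.id : MvPolynomial ℕ ℂ →ₗ[ℂ] MvPolynomial ℕ ℂ)) b := fun b => rfl
  have hZsingle : ∀ (p : ℤ) (f : MvPolynomial ℕ ℂ),
      Z (Finsupp.single p f) = (p : ℂ) • Finsupp.single p f :=
    fun p f => Finsupp.lsum_single _ _ _ _
  have hmulEsingle : ∀ (q p : ℤ) (f : MvPolynomial ℕ ℂ),
      mulE q (Finsupp.single p f) = Finsupp.single (p + q) f :=
    fun q p f => Finsupp.lsum_single _ _ _ _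
  -- key computation of (x•id - Z)^n on b
  have hpow : ∀ (x : ℂ) (n : ℕ) (b : A),
      ((x • (LinearMap.id : A →ₗ[ℂ] A) - Z) ^ n) b
        = b.sum fun p f => Finsupp.single p ((x - (p : ℂ)) ^ n • f) := by
    intro x n
    induction n with
    | zero =>
      intro b
      simp only [pow_zero, Module.End.one_apply, one_smul]
      exact b.sum_single.symm
    | succ n ih =>
      intro b
      rw [pow_succ', Module.End.mul_apply, ih, map_finsuppSum]
      refine Finsupp.sum_congr fun p _ => ?_
      rw [LinearMap.sub_apply, LinearMap.smul_apply, LinearMap.id_apply, hZsingle,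
        Finsupp.smul_single, Finsupp.smul_single, ← Finsupp.single_sub, ← sub_smul,
        smul_smul, ← pow_succ']
  have hev_pow : ∀ (n : ℕ) (b : A),
      ev0 (((ω • (LinearMap.id : A →ₗ[ℂ] A) - Z) ^ n) b)
        = b.sum fun p f => (ω - (p : ℂ)) ^ n • f := by
    intro n b
    rw [hev0, hpow, map_finsuppSum]
    refine Finsupp.sum_congr fun p _ => ?_
    exact Finsupp.lsum_single _ _ _ _
  -- the common polynomial-evaluation expression
  set G : ℂ → MvPolynomial ℕ ℂ := fun x => ∑ γ : Υ, ∑ n ∈ Finset.range (N γ), ∑ p ∈ T γ,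
      (x - (p : ℂ)) ^ n • (D γ n (g γ)) p with hG
  -- Step 1: the goal equals `G ω = 0`
  have hgoal : (∑ γ : Υ, ev0 (∑ᶠ n : ℕ,
      ((ω • (LinearMap.id : A →ₗ[ℂ] A) - Z) ^ n) (D γ n (g γ)))) = G ω := by
    refine Finset.sum_congr rfl fun γ _ => ?_
    have h1 : (∑ᶠ n : ℕ, ((ω • (LinearMap.id : A →ₗ[ℂ] A) - Z) ^ n) (D γ n (g γ)))
        = ∑ n ∈ Finset.range (N γ),
            ((ω • (LinearMap.id : A →ₗ[ℂ] A) - Z) ^ n) (D γ n (g γ)) := by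
      refine finsum_eq_sum_of_support_subset _ ?_
      intro n hn
      simp only [Finset.coe_range, Set.mem_Iio]
      by_contra h
      refine hn ?_
      show ((ω • (LinearMap.id : A →ₗ[ℂ] A) - Z) ^ n) (D γ n (g γ)) = 0
      rw [hNspec γ n (le_of_not_gt h), map_zero]
    rw [h1, hev0, map_sum]
    refine Finset.sum_congr rfl fun n hn => ?_
    rw [← hev0, hev_pow]
    exact Finsupp.sum_of_support_subset _ (hsuppT γ n hn) _ (fun p _ => smul_zero _)
  -- Step 2: G vanishes at every integer
  have hint : ∀ m : ℤ, G (m : ℂ) = 0 := by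
    intro m
    have h0 := DFunLike.congr_fun hsum m
    rw [Finsupp.finset_sum_apply] at h0
    have h0' : (∑ γ : Υ, (∑ᶠ q : ℤ, mulE q (∑ᶠ n : ℕ, (q : ℂ) ^ n • D γ n (g γ))) m)
        = 0 := by rw [h0]; rfl
    rw [hG, ← h0']
    refine Finset.sum_congr rfl fun γ _ => ?_
    have hfinq : (Function.support fun q : ℤ =>
        mulE q (∑ᶠ n : ℕ, (q : ℂ) ^ n • D γ n (g γ))).Finite := by
      apply Set.Finite.subset (hfin γ)
      intro q hq
      simp only [Set.mem_setOf_eq]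
      intro h
      refine hq ?_
      show mulE q (∑ᶠ n : ℕ, (q : ℂ) ^ n • D γ n (g γ)) = 0
      rw [h, map_zero]
    have happly : (∑ᶠ q : ℤ, mulE q (∑ᶠ n : ℕ, (q : ℂ) ^ n • D γ n (g γ))) m
        = ∑ᶠ q : ℤ, (mulE q (∑ᶠ n : ℕ, (q : ℂ) ^ n • D γ n (g γ))) m :=
      (Finsupp.applyAddHom (M := MvPolynomial ℕ ℂ) m).map_finsum hfinq
    have hmulE : ∀ (q : ℤ) (c : A), (mulE q c) m = c (m - q) := by
      intro q c
      have hcomp : (Finsupp.lapply m : A →ₗ[ℂ] MvPolynomial ℕ ℂ) ∘ₗ mulE q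
          = Finsupp.lapply (m - q) := by
        apply Finsupp.lhom_ext
        intro p f
        simp only [LinearMap.comp_apply, Finsupp.lapply_apply, hmulEsingle,
          Finsupp.single_apply]
        by_cases hpq : p + q = m
        · rw [if_pos hpq, if_pos (by omega)]
        · rw [if_neg hpq, if_neg (by omega)]
      exact DFunLike.congr_fun hcomp c
    have hfinsum_n : ∀ q : ℤ, (∑ᶠ n : ℕ, (q : ℂ) ^ n • D γ n (g γ))
        = ∑ n ∈ Finset.range (N γ), (q : ℂ) ^ n • D γ n (g γ) := by
      intro q
      refine finsum_eq_sum_of_support_subset _ ?_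
      intro n hn
      simp only [Finset.coe_range, Set.mem_Iio]
      by_contra h
      refine hn ?_
      show (q : ℂ) ^ n • D γ n (g γ) = 0
      rw [hNspec γ n (le_of_not_gt h), smul_zero]
    have hre : (∑ᶠ q : ℤ, (mulE q (∑ᶠ n : ℕ, (q : ℂ) ^ n • D γ n (g γ))) m)
        = ∑ᶠ p : ℤ, ∑ n ∈ Finset.range (N γ),
            ((m : ℂ) - (p : ℂ)) ^ n • (D γ n (g γ)) p := by
      rw [← finsum_comp_equiv (Equiv.subLeft m)]
      refine finsum_congr fun q => ?_
      rw [hmulE, hfinsum_n]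
      simp only [Equiv.subLeft_apply]
      rw [Finsupp.finset_sum_apply]
      refine Finset.sum_congr rfl fun n _ => ?_
      rw [Finsupp.smul_apply]
      congr 2
      · push_cast; ring
      · omega
    have hsubT : (Function.support fun p : ℤ => ∑ n ∈ Finset.range (N γ),
        ((m : ℂ) - (p : ℂ)) ^ n • (D γ n (g γ)) p) ⊆ ↑(T γ) := by
      intro p hp
      by_contra h
      apply hp
      refine Finset.sum_eq_zero fun n hn => ?_
      rw [Finsupp.notMem_support_iff.mp fun hmem => h (hsuppT γ n hn hmem), smul_zero]
    rw [happly, hre, finsum_eq_sum_of_support_subset _ hsubT]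
    exact Finset.sum_comm
  -- Step 3: G is a polynomial function of x, vanishing on ℤ, hence identically zero
  set F : Polynomial (MvPolynomial ℕ ℂ) := ∑ γ : Υ, ∑ n ∈ Finset.range (N γ), ∑ p ∈ T γ,
      (Polynomial.X - Polynomial.C (MvPolynomial.C (p : ℂ))) ^ n
        * Polynomial.C ((D γ n (g γ)) p) with hF
  have heval : ∀ x : ℂ, Polynomial.eval (MvPolynomial.C x) F = G x := by
    intro x
    rw [hF, hG]
    simp only [Polynomial.eval_finset_sum, Polynomial.eval_mul, Polynomial.eval_pow,
      Polynomial.eval_sub, Polynomial.eval_X, Polynomial.eval_C]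
    refine Finset.sum_congr rfl fun γ _ => Finset.sum_congr rfl fun n _ =>
      Finset.sum_congr rfl fun p _ => ?_
    rw [MvPolynomial.smul_eq_C_mul, ← map_sub, ← map_pow]
  have hF0 : F = 0 := by
    apply Polynomial.eq_zero_of_infinite_isRoot
    have hinf : (Set.range fun m : ℤ =>
        (MvPolynomial.C (m : ℂ) : MvPolynomial ℕ ℂ)).Infinite :=
      Set.infinite_range_of_injective (fun m₁ m₂ h => by
        exact_mod_cast MvPolynomial.C_injective ℕ ℂ h)
    refine Set.Infinite.mono ?_ hinf
    rintro _ ⟨m, rfl⟩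
    simp only [Set.mem_setOf_eq, Polynomial.IsRoot]
    rw [heval, hint]
  rw [hgoal, ← heval ω, hF0, Polynomial.eval_zero]
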